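/- arXiv:quant-ph/0509169 — 6 statements merged into one kernel-verified Lean document; each statement's English description precedes it below -/
import Mathlib

section
/- Let w, z, x, y be real numbers with w ≥ z ≥ x ≥ y ≥ 0 and w + z + x + y = 1, and let E(ρ) = wρ + xXρX + yYρY + zZρZ. Then for every single-qubit density matrix ρ, the operator norm satisfies ‖E(ρ) − (1/2)I‖_∞ ≤ w + z − 1/2, and equality is attained for ρ = [[1,0],[0,0]]. Hence the worst-case operator-norm deviation of the Pauli scheme from the completely mixed state equals the sum of the two largest weights minus 1/2. -/
open Matrix
open scoped ComplexOrder

noncomputable section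

/-- The Pauli matrix X. -/
def PX : Matrix (Fin 2) (Fin 2) ℂ := !![0, 1; 1, 0]
/-- The Pauli matrix Y. -/
def PY : Matrix (Fin 2) (Fin 2) ℂ := !![0, -Complex.I; Complex.I, 0]
/-- The Pauli matrix Z. -/
def PZ : Matrix (Fin 2) (Fin 2) ℂ := !![1, 0; 0, -1]

/-- The operator norm of a matrix, i.e. the norm of the induced operator on Euclidean space;
for a Hermitian matrix this is the maximum of the absolute values of its eigenvalues. -/
def opNorm {m : Type*} [Fintype m] [DecidableEq m] (A : Matrix m m ℂ) : ℝ :=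
  ‖Matrix.toEuclideanCLM (𝕜 := ℂ) A‖

set_option synthInstance.maxHeartbeats 400000 in
lemma opNorm_aux (d : ℝ) (c : ℂ) :
    opNorm (!![(d:ℂ), c; (starRingEnd ℂ) c, -(d:ℂ)])
      = Real.sqrt (d^2 + Complex.normSq c) := by
  rw [opNorm]
  set M : Matrix (Fin 2) (Fin 2) ℂ := !![(d:ℂ), c; (starRingEnd ℂ) c, -(d:ℂ)] with hM
  have hstar : star M = M := by
    ext i j
    fin_cases i <;> fin_cases j <;>
      simp [hM, Matrix.star_eq_conjTranspose, Matrix.conjTranspose_apply, Complex.conj_ofReal]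
  have hsq : M * M = (((d^2 + Complex.normSq c : ℝ) : ℂ)) • 1 := by
    ext i j
    fin_cases i <;> fin_cases j <;>
      simp [hM, Matrix.mul_apply, Fin.sum_univ_two, Matrix.one_apply,
        Complex.normSq_eq_conj_mul_self] <;>
      push_cast <;> ring
  set T := Matrix.toEuclideanCLM (𝕜 := ℂ) M with hT
  have h1 : ‖T‖ * ‖T‖ = d^2 + Complex.normSq c := by
    have := CStarRing.norm_star_mul_self (x := T)
    rw [← map_star, hstar, hT, ← _root_.map_mul, hsq] at this
    rw [← this, _root_.map_smul, _root_.map_one]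
    rw [← Algebra.algebraMap_eq_smul_one, norm_algebraMap', Complex.norm_real,
      Real.norm_eq_abs, abs_of_nonneg (by nlinarith [Complex.normSq_nonneg c, sq_nonneg d])]
  rw [show d^2 + Complex.normSq c = ‖T‖ * ‖T‖ from h1.symm,
    Real.sqrt_mul_self (norm_nonneg _)]

lemma conjX (ρ : Matrix (Fin 2) (Fin 2) ℂ) :
    PX * ρ * PX = !![ρ 1 1, ρ 1 0; ρ 0 1, ρ 0 0] := by
  ext i j
  fin_cases i <;> fin_cases j <;>
    simp [PX, Matrix.mul_apply, Matrix.vecMul, dotProduct, Fin.sum_univ_two]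

lemma conjY (ρ : Matrix (Fin 2) (Fin 2) ℂ) :
    PY * ρ * PY = !![ρ 1 1, -(ρ 1 0); -(ρ 0 1), ρ 0 0] := by
  ext i j
  fin_cases i <;> fin_cases j <;>
    simp [PY, Matrix.mul_apply, Matrix.vecMul, dotProduct, Fin.sum_univ_two] <;>
    ring_nf <;> simp [Complex.I_sq] <;> ring

lemma conjZ (ρ : Matrix (Fin 2) (Fin 2) ℂ) :
    PZ * ρ * PZ = !![ρ 0 0, -(ρ 0 1); -(ρ 1 0), ρ 1 1] := by
  ext i j
  fin_cases i <;> fin_cases j <;>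
    simp [PZ, Matrix.mul_apply, Matrix.vecMul, dotProduct, Fin.sum_univ_two]

/-- The Pauli scheme `E(ρ) = wρ + xXρX + yYρY + zZρZ` with decreasingly ordered weights
satisfies `‖E(ρ) − (1/2)I‖_∞ ≤ w + z − 1/2` for every single-qubit density matrix `ρ`,
with equality attained at `ρ = [[1,0],[0,0]]`. -/
theorem pauli_scheme_opNorm_bound (w z x y : ℝ)
    (h1 : w ≥ z) (h2 : z ≥ x) (h3 : x ≥ y) (h4 : y ≥ 0)
    (hsum : w + z + x + y = 1) :
    (∀ ρ : Matrix (Fin 2) (Fin 2) ℂ, ρ.PosSemidef → ρ.trace = 1 →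
      opNorm (w • ρ + x • (PX * ρ * PX) + y • (PY * ρ * PY) + z • (PZ * ρ * PZ)
          - (1/2 : ℝ) • (1 : Matrix (Fin 2) (Fin 2) ℂ)) ≤ w + z - 1/2)
    ∧ opNorm (w • (!![1,0;0,0] : Matrix (Fin 2) (Fin 2) ℂ)
          + x • (PX * !![1,0;0,0] * PX) + y • (PY * !![1,0;0,0] * PY)
          + z • (PZ * !![1,0;0,0] * PZ)
          - (1/2 : ℝ) • (1 : Matrix (Fin 2) (Fin 2) ℂ)) = w + z - 1/2 := by
  have hs : (0:ℝ) ≤ w + z - 1/2 := by linarith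
  constructor
  · intro ρ hPSD htr
    have hherm := hPSD.isHermitian
    set a : ℝ := (ρ 0 0).re with ha_def
    set b : ℂ := ρ 0 1 with hb_def
    have h00 : ρ 0 0 = (a : ℂ) := by
      have him : (ρ 0 0).im = 0 := by
        have := congrArg Complex.im (hherm.apply 0 0)
        simp at this; linarith
      apply Complex.ext
      · simp [ha_def]
      · simp [him]
    have h10 : ρ 1 0 = (starRingEnd ℂ) b := (hherm.apply 1 0).symm
    have htr2 : ρ 0 0 + ρ 1 1 = 1 := by
      have : ρ.trace = ρ 0 0 + ρ 1 1 := by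
        simp [Matrix.trace, Fin.sum_univ_two]
      rw [← this, htr]
    have h11 : ρ 1 1 = ((1 - a : ℝ) : ℂ) := by
      push_cast; rw [← h00]; linear_combination htr2
    -- positivity facts
    have ha0 : 0 ≤ a := by
      have := hPSD.re_dotProduct_nonneg ![1, 0]
      simpa [dotProduct, Matrix.mulVec, Fin.sum_univ_two, ha_def] using this
    have ha1 : a ≤ 1 := by
      have := hPSD.re_dotProduct_nonneg ![0, 1]
      simp [dotProduct, Matrix.mulVec, Fin.sum_univ_two, h11] at this
      linarith
    have hdet : Complex.normSq b ≤ a * (1 - a) := by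
      have k1 := hPSD.re_dotProduct_nonneg ![((1 - a : ℝ) : ℂ), -(starRingEnd ℂ) b]
      have k2 := hPSD.re_dotProduct_nonneg ![-b, ((a : ℝ) : ℂ)]
      have e1 : star (![((1 - a : ℝ) : ℂ), -(starRingEnd ℂ) b]) ⬝ᵥ
          ρ.mulVec ![((1 - a : ℝ) : ℂ), -(starRingEnd ℂ) b]
          = (((1-a) * (a*(1-a) - Complex.normSq b) : ℝ) : ℂ) := by
        simp [dotProduct, Matrix.mulVec, Fin.sum_univ_two, h00, h10, h11,
          Complex.normSq_eq_conj_mul_self, Complex.conj_ofReal]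
        push_cast
        ring
      have e2 : star (![-b, ((a : ℝ) : ℂ)]) ⬝ᵥ ρ.mulVec ![-b, ((a : ℝ) : ℂ)]
          = ((a * (a*(1-a) - Complex.normSq b) : ℝ) : ℂ) := by
        simp [dotProduct, Matrix.mulVec, Fin.sum_univ_two, h00, h10, h11,
          Complex.normSq_eq_conj_mul_self, Complex.conj_ofReal]
        push_cast
        ring
      rw [e1] at k1
      rw [e2] at k2
      simp [RCLike.ofReal_alg] at k1 k2
      nlinarith [k1, k2]
    -- the matrix has the standard Hermitian traceless form
    set d : ℝ := (w + z - 1/2) * (2*a - 1) with hd_def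
    set cc : ℂ := ((w - z : ℝ) : ℂ) * b + ((x - y : ℝ) : ℂ) * (starRingEnd ℂ) b with hcc_def
    have hmat : w • ρ + x • (PX * ρ * PX) + y • (PY * ρ * PY) + z • (PZ * ρ * PZ)
          - (1/2 : ℝ) • (1 : Matrix (Fin 2) (Fin 2) ℂ)
        = !![(d:ℂ), cc; (starRingEnd ℂ) cc, -(d:ℂ)] := by
      have hsumC : (w:ℂ) + z + x + y = 1 := by exact_mod_cast hsum
      rw [conjX, conjY, conjZ]
      ext i j
      fin_cases i <;> fin_cases j <;>
        simp [Matrix.one_apply, h00, h10, h11, hd_def, hcc_def, Complex.real_smul,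
          Complex.conj_ofReal, map_add, _root_.map_mul] <;>
        push_cast <;>
        [linear_combination (1 - (a:ℂ)) * hsumC; ring; ring;
          linear_combination (a:ℂ) * hsumC]
    rw [hmat, opNorm_aux]
    -- bound the off-diagonal entry
    have habs : ‖cc‖ ≤ (w - z + x - y) * ‖b‖ := by
      calc ‖cc‖ ≤ ‖(((w - z : ℝ) : ℂ) * b)‖
              + ‖(((x - y : ℝ) : ℂ) * (starRingEnd ℂ) b)‖ :=
            norm_add_le _ _
        _ = (w - z) * ‖b‖ + (x - y) * ‖b‖ := by
            rw [norm_mul, norm_mul, Complex.norm_real, Complex.norm_real, Real.norm_eq_abs,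
              Real.norm_eq_abs,
              Complex.norm_conj, abs_of_nonneg (sub_nonneg.2 h1), abs_of_nonneg (sub_nonneg.2 h3)]
        _ = (w - z + x - y) * ‖b‖ := by ring
    have hccsq : Complex.normSq cc ≤ (w - z + x - y)^2 * Complex.normSq b := by
      have h := mul_self_le_mul_self (norm_nonneg cc) habs
      rw [← Complex.sq_norm, ← Complex.sq_norm]
      nlinarith [h]
    -- final real inequality
    have key : d^2 + Complex.normSq cc ≤ (w + z - 1/2)^2 := by
      have hA : 0 ≤ a * (1 - a) := mul_nonneg ha0 (by linarith)
      have hzx : (0:ℝ) ≤ z - x := by linarith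
      have hwy : (0:ℝ) ≤ w - y := by linarith
      have h2s : 2*(w+z-1/2) = w+z-x-y := by linarith
      have hfac : 4*(w+z-1/2)^2 - (w-z+x-y)^2 = 4*(z-x)*(w-y) := by
        linear_combination (2*(w+z-1/2) + (w+z-x-y)) * h2s
      have hq : (0:ℝ) ≤ 4*(w+z-1/2)^2 - (w-z+x-y)^2 := by
        rw [hfac]; positivity
      have hid : (w+z-1/2)^2 - d^2 = 4*(w+z-1/2)^2*(a*(1-a)) := by
        rw [hd_def]; ring
      have hn : Complex.normSq cc ≤ (w-z+x-y)^2 * (a*(1-a)) :=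
        le_trans hccsq (mul_le_mul_of_nonneg_left hdet (sq_nonneg _))
      have h5 : (w-z+x-y)^2 * (a*(1-a)) ≤ 4*(w+z-1/2)^2 * (a*(1-a)) :=
        mul_le_mul_of_nonneg_right (by linarith) hA
      linarith
    calc Real.sqrt (d^2 + Complex.normSq cc) ≤ Real.sqrt ((w + z - 1/2)^2) :=
          Real.sqrt_le_sqrt key
      _ = w + z - 1/2 := Real.sqrt_sq hs
  · have hmat : w • (!![1,0;0,0] : Matrix (Fin 2) (Fin 2) ℂ)
          + x • (PX * !![1,0;0,0] * PX) + y • (PY * !![1,0;0,0] * PY)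
          + z • (PZ * !![1,0;0,0] * PZ)
          - (1/2 : ℝ) • (1 : Matrix (Fin 2) (Fin 2) ℂ)
        = !![((w + z - 1/2 : ℝ):ℂ), (0:ℂ); (starRingEnd ℂ) (0:ℂ), -((w + z - 1/2 : ℝ):ℂ)] := by
      have hsumC : (w:ℂ) + z + x + y = 1 := by exact_mod_cast hsum
      rw [conjX, conjY, conjZ]
      ext i j
      fin_cases i <;> fin_cases j <;>
        simp [Matrix.one_apply, Complex.real_smul] <;> push_cast <;>
        linear_combination (1:ℂ) * hsumC
    rw [hmat, opNorm_aux, Complex.normSq_zero, add_zero, Real.sqrt_sq hs]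

end
end

section
/- Let w, z, x, y be real numbers with w ≥ z ≥ x ≥ y ≥ 0 and w + z + x + y = 1, and let E(ρ) = wρ + xXρX + yYρY + zZρZ. Then for every single-qubit density matrix ρ, the Frobenius (2-) norm satisfies ‖E(ρ) − (1/2)I‖₂ ≤ √2 · (w + z − 1/2), and equality is attained for ρ = [[1,0],[0,0]]; i.e., the 2-norm is maximized by the same state as the operator norm, since E(ρ) − (1/2)I is traceless Hermitian with eigenvalues ±λ. -/
open Matrix
open scoped ComplexOrder

noncomputable section

/-- The Frobenius (2-) norm of a matrix: the square root of the sum of the squared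
absolute values of its entries. -/
def frobNorm {m : Type*} [Fintype m] (A : Matrix m m ℂ) : ℝ :=
  Real.sqrt (∑ i, ∑ j, ‖A i j‖ ^ 2)

set_option maxHeartbeats 2000000 in
/-- The Pauli scheme `E(ρ) = wρ + xXρX + yYρY + zZρZ` with decreasingly ordered weights
satisfies `‖E(ρ) − (1/2)I‖₂ ≤ √2·(w + z − 1/2)` for every single-qubit density matrix `ρ`,
with equality attained at `ρ = [[1,0],[0,0]]`. -/
theorem pauli_scheme_frobNorm_bound (w z x y : ℝ)
    (h1 : w ≥ z) (h2 : z ≥ x) (h3 : x ≥ y) (h4 : y ≥ 0)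
    (hsum : w + z + x + y = 1) :
    (∀ ρ : Matrix (Fin 2) (Fin 2) ℂ, ρ.PosSemidef → ρ.trace = 1 →
      frobNorm (w • ρ + x • (PX * ρ * PX) + y • (PY * ρ * PY) + z • (PZ * ρ * PZ)
          - (1/2 : ℝ) • (1 : Matrix (Fin 2) (Fin 2) ℂ)) ≤ Real.sqrt 2 * (w + z - 1/2))
    ∧ frobNorm (w • (!![1,0;0,0] : Matrix (Fin 2) (Fin 2) ℂ)
          + x • (PX * !![1,0;0,0] * PX) + y • (PY * !![1,0;0,0] * PY)
          + z • (PZ * !![1,0;0,0] * PZ)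
          - (1/2 : ℝ) • (1 : Matrix (Fin 2) (Fin 2) ℂ)) = Real.sqrt 2 * (w + z - 1/2) := by
  constructor
  · intro ρ hρ htr
    have hwz : w + z - 1/2 ≥ 0 := by linarith
    set a := (ρ 0 0).re with ha
    set d := (ρ 1 1).re with hd
    set p := (ρ 0 1).re with hp
    set q := (ρ 0 1).im with hq
    have h00 : ρ 0 0 = (a : ℂ) := (hρ.1.coe_re_apply_self 0).symm
    have h11 : ρ 1 1 = (d : ℂ) := (hρ.1.coe_re_apply_self 1).symm
    have h10 : ρ 1 0 = (starRingEnd ℂ) (ρ 0 1) := (hρ.1.apply 1 0).symm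
    have h01 : ρ 0 1 = (p : ℂ) + (q : ℂ) * Complex.I := by
      rw [hp, hq]; exact (Complex.re_add_im _).symm
    have h10' : ρ 1 0 = (p : ℂ) - (q : ℂ) * Complex.I := by
      rw [h10, h01]; simp [Complex.ext_iff]
    have had : a + d = 1 := by
      have := congrArg Complex.re htr
      simpa [Matrix.trace, Fin.sum_univ_two] using this
    have ha0 : 0 ≤ a := by
      have := hρ.re_dotProduct_nonneg (Pi.single 0 1)
      simpa [dotProduct, Matrix.mulVec, Fin.sum_univ_two, Pi.single] using this
    have hd0 : 0 ≤ d := by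
      have := hρ.re_dotProduct_nonneg (Pi.single 1 1)
      simpa [dotProduct, Matrix.mulVec, Fin.sum_univ_two, Pi.single] using this
    have hk1 : 0 ≤ a * (a * d - (p^2 + q^2)) := by
      have := hρ.re_dotProduct_nonneg ![-(ρ 0 1), (a : ℂ)]
      simp only [dotProduct, Matrix.mulVec, Fin.sum_univ_two, Matrix.cons_val_zero,
        Matrix.cons_val_one, Matrix.head_cons, h00, h11, h01, h10'] at this
      simp [Complex.ext_iff, Complex.add_re, Complex.mul_re, Complex.mul_im] at this
      nlinarith [this]
    have hk2 : 0 ≤ d * (a * d - (p^2 + q^2)) := by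
      have := hρ.re_dotProduct_nonneg ![(d : ℂ), -((p : ℂ) - (q : ℂ) * Complex.I)]
      simp only [dotProduct, Matrix.mulVec, Fin.sum_univ_two, Matrix.cons_val_zero,
        Matrix.cons_val_one, Matrix.head_cons, h00, h11, h01, h10'] at this
      simp [Complex.ext_iff, Complex.add_re, Complex.mul_re, Complex.mul_im] at this
      nlinarith [this]
    have hb : p^2 + q^2 ≤ a * d := by nlinarith [hk1, hk2]
    rw [frobNorm, show Real.sqrt 2 * (w+z-1/2) = Real.sqrt (2*(w+z-1/2)^2) by
      rw [Real.sqrt_mul (by norm_num), Real.sqrt_sq hwz]]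
    apply Real.sqrt_le_sqrt
    simp only [PX, PY, PZ, Fin.sum_univ_two, Matrix.mul_apply, Matrix.add_apply,
      Matrix.sub_apply, Matrix.smul_apply, Matrix.one_fin_two, Matrix.cons_val',
      Matrix.cons_val_zero, Matrix.cons_val_one, Matrix.head_cons, Matrix.head_fin_const,
      Matrix.empty_val', Matrix.cons_val_fin_one, Matrix.of_apply, h00, h11, h01, h10']
    simp only [Complex.sq_norm, Complex.normSq_apply]
    simp only [Complex.add_re, Complex.add_im, Complex.sub_re, Complex.sub_im,
      Complex.mul_re, Complex.mul_im, Complex.neg_re, Complex.neg_im, Complex.I_re,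
      Complex.I_im, Complex.ofReal_re, Complex.ofReal_im, Complex.one_re, Complex.one_im,
      Complex.zero_re, Complex.zero_im, Complex.smul_re, Complex.smul_im,
      Complex.conj_re, Complex.conj_im, smul_eq_mul]
    have hd' : d = 1 - a := by linarith
    have hy' : y = 1 - w - z - x := by linarith
    have hb' : p^2 + q^2 ≤ a * (1 - a) := by rw [hd'] at hb; exact hb
    rw [hd', hy']
    linarith [mul_nonneg (mul_nonneg (show (0:ℝ) ≤ 2*z-2*x by linarith)
        (show (0:ℝ) ≤ 2*w-2*(1-w-z-x) by linarith)) (sq_nonneg p),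
      mul_nonneg (mul_nonneg (show (0:ℝ) ≤ 2*z-2*(1-w-z-x) by linarith)
        (show (0:ℝ) ≤ 2*w-2*x by linarith)) (sq_nonneg q),
      mul_nonneg (sq_nonneg (w+z-x-(1-w-z-x))) (sub_nonneg.2 hb')]
  · have hwz : w + z - 1/2 ≥ 0 := by linarith
    rw [frobNorm]
    have h : (∑ i, ∑ j, ‖(w • (!![1,0;0,0] : Matrix (Fin 2) (Fin 2) ℂ)
            + x • (PX * !![1,0;0,0] * PX) + y • (PY * !![1,0;0,0] * PY)
            + z • (PZ * !![1,0;0,0] * PZ)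
            - (1/2 : ℝ) • (1 : Matrix (Fin 2) (Fin 2) ℂ) : Matrix (Fin 2) (Fin 2) ℂ) i j‖ ^ 2)
        = 2 * (w + z - 1/2)^2 := by
      simp only [PX, PY, PZ, Fin.sum_univ_two, Matrix.mul_apply, Matrix.add_apply,
        Matrix.sub_apply, Matrix.smul_apply, Matrix.one_fin_two, Matrix.cons_val',
        Matrix.cons_val_zero, Matrix.cons_val_one, Matrix.head_cons, Matrix.head_fin_const,
        Matrix.empty_val', Matrix.cons_val_fin_one]
      simp [Complex.sq_norm, Complex.normSq, Complex.ext_iff]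
      ring_nf
      nlinarith [sq_nonneg (w+z-1/2)]
    rw [h, show (2 : ℝ) * (w + z - 1/2)^2 = 2 * (w+z-1/2)^2 by ring,
      Real.sqrt_mul (by norm_num), Real.sqrt_sq hwz]

end
end

section
/- Let w, x, y, z be nonnegative real numbers with w + x + y + z = 1, and suppose the Pauli channel E(ρ) = wρ + xXρX + yYρY + zZρZ is a perfect encryption, i.e., E(ρ) = (1/2)I for every single-qubit density matrix ρ. Then w = x = y = z = 1/4; the uniform distribution over the four Pauli matrices is the only Pauli scheme achieving perfect encryption. -/
open Matrix
open scoped ComplexOrder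

noncomputable section

/-!
The Pauli channel is diagonal in the Pauli basis: it multiplies `1` by `w + x + y + z` and each
Pauli matrix `P` by `w ± x ± y ± z`, the sign of a coefficient being `+` exactly when the
corresponding Pauli matrix commutes with `P`. Since `P` is a traceless Hermitian involution,
`(1 + P) / 2` is a density matrix, and it is sent to `1 / 2 + (w ± x ± y ± z) P / 2`. Perfect
encryption therefore makes all three coefficients vanish, and together with `w + x + y + z = 1`
this linear system has the unique solution `w = x = y = z = 1 / 4`.
-/

theorem Matrix.PosSemidef.of_isHermitian_of_isIdempotentElem {n R : Type*} [Fintype n]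
    [CommRing R] [PartialOrder R] [StarRing R] [StarOrderedRing R] {A : Matrix n n R}
    (hA : A.IsHermitian) (hA2 : IsIdempotentElem A) : A.PosSemidef := by
  have h : Aᴴ * A = A := by rw [hA.eq, hA2.eq]
  exact h ▸ posSemidef_conjTranspose_mul_self A

theorem isIdempotentElem_half_smul_one_add {A : Type*} [Ring A] [Algebra ℝ A] {P : A}
    (hP : P * P = 1) : IsIdempotentElem ((1 / 2 : ℝ) • (1 + P)) := by
  rw [IsIdempotentElem, smul_mul_smul, add_mul, one_mul, mul_add, mul_one, hP]
  module

theorem Matrix.IsHermitian.posSemidef_half_smul_one_add {n : Type*} [Fintype n] [DecidableEq n]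
    {P : Matrix n n ℂ} (hP : P.IsHermitian) (hP2 : P * P = 1) :
    ((1 / 2 : ℝ) • (1 + P)).PosSemidef :=
  .of_isHermitian_of_isIdempotentElem ((isHermitian_one.add hP).smul (.all _))
    (isIdempotentElem_half_smul_one_add hP2)

theorem trace_half_smul_one_add {P : Matrix (Fin 2) (Fin 2) ℂ} (hP : P.trace = 0) :
    ((1 / 2 : ℝ) • (1 + P)).trace = 1 := by
  simp [trace_smul, trace_add, hP]

theorem isHermitian_PX : PX.IsHermitian := by
  ext i j; fin_cases i <;> fin_cases j <;> simp [PX]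

theorem isHermitian_PY : PY.IsHermitian := by
  ext i j; fin_cases i <;> fin_cases j <;> simp [PY]

theorem isHermitian_PZ : PZ.IsHermitian := by
  ext i j; fin_cases i <;> fin_cases j <;> simp [PZ]

theorem PX_mul_self : PX * PX = 1 := by
  ext i j; fin_cases i <;> fin_cases j <;> simp [PX]

theorem PY_mul_self : PY * PY = 1 := by
  ext i j; fin_cases i <;> fin_cases j <;> simp [PY]

theorem PZ_mul_self : PZ * PZ = 1 := by
  ext i j; fin_cases i <;> fin_cases j <;> simp [PZ]

theorem trace_PX : PX.trace = 0 := by simp [PX, trace_fin_two]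

theorem trace_PY : PY.trace = 0 := by simp [PY, trace_fin_two]

theorem trace_PZ : PZ.trace = 0 := by simp [PZ, trace_fin_two]

theorem PX_ne_zero : PX ≠ 0 := fun h => by simpa [PX] using congrFun (congrFun h 0) 1

theorem PY_ne_zero : PY ≠ 0 := fun h => by simpa [PY] using congrFun (congrFun h 0) 1

theorem PZ_ne_zero : PZ ≠ 0 := fun h => by simpa [PZ] using congrFun (congrFun h 0) 0

def pauliChannel (w x y z : ℝ) (ρ : Matrix (Fin 2) (Fin 2) ℂ) : Matrix (Fin 2) (Fin 2) ℂ :=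
  w • ρ + x • (PX * ρ * PX) + y • (PY * ρ * PY) + z • (PZ * ρ * PZ)

theorem pauliChannel_one (w x y z : ℝ) : pauliChannel w x y z 1 = (w + x + y + z) • 1 := by
  ext i j; fin_cases i <;> fin_cases j <;> simp [pauliChannel, PX, PY, PZ, one_fin_two]

theorem pauliChannel_PX (w x y z : ℝ) : pauliChannel w x y z PX = (w + x - y - z) • PX := by
  ext i j; fin_cases i <;> fin_cases j <;> simp [pauliChannel, PX, PY, PZ] <;> ring_nf

theorem pauliChannel_PY (w x y z : ℝ) : pauliChannel w x y z PY = (w - x + y - z) • PY := by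
  ext i j; fin_cases i <;> fin_cases j <;> simp [pauliChannel, PX, PY, PZ] <;> ring_nf

theorem pauliChannel_PZ (w x y z : ℝ) : pauliChannel w x y z PZ = (w - x - y + z) • PZ := by
  ext i j; fin_cases i <;> fin_cases j <;> simp [pauliChannel, PX, PY, PZ] <;> ring_nf

theorem pauliChannel_half_smul_one_add (w x y z : ℝ) (P : Matrix (Fin 2) (Fin 2) ℂ) :
    pauliChannel w x y z ((1 / 2 : ℝ) • (1 + P)) =
      (1 / 2 : ℝ) • (pauliChannel w x y z 1 + pauliChannel w x y z P) := by
  simp only [pauliChannel, mul_smul_comm, smul_mul_assoc, mul_add, add_mul, smul_add,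
    smul_comm _ (1 / 2 : ℝ)]
  abel

theorem pauliChannel_eigenvalue_eq_zero {w x y z c : ℝ} {P : Matrix (Fin 2) (Fin 2) ℂ}
    (hsum : w + x + y + z = 1)
    (hperfect : ∀ ρ : Matrix (Fin 2) (Fin 2) ℂ, ρ.PosSemidef → ρ.trace = 1 →
      pauliChannel w x y z ρ = (1 / 2 : ℝ) • (1 : Matrix (Fin 2) (Fin 2) ℂ))
    (hP : P.IsHermitian) (hP2 : P * P = 1) (htr : P.trace = 0) (hP0 : P ≠ 0)
    (hc : pauliChannel w x y z P = c • P) : c = 0 := by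
  have h := hperfect _ (hP.posSemidef_half_smul_one_add hP2) (trace_half_smul_one_add htr)
  rw [pauliChannel_half_smul_one_add, pauliChannel_one, hsum, one_smul, hc, smul_add,
    add_eq_left, smul_smul, smul_eq_zero] at h
  simpa [hP0] using h

theorem perfect_pauli_encryption_unique_general (w x y z : ℝ)
    (hsum : w + x + y + z = 1)
    (hperfect : ∀ ρ : Matrix (Fin 2) (Fin 2) ℂ, ρ.PosSemidef → ρ.trace = 1 →
      w • ρ + x • (PX * ρ * PX) + y • (PY * ρ * PY) + z • (PZ * ρ * PZ)
        = (1/2 : ℝ) • (1 : Matrix (Fin 2) (Fin 2) ℂ)) :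
    w = 1/4 ∧ x = 1/4 ∧ y = 1/4 ∧ z = 1/4 := by
  have hX := pauliChannel_eigenvalue_eq_zero hsum hperfect isHermitian_PX PX_mul_self trace_PX
    PX_ne_zero (pauliChannel_PX w x y z)
  have hY := pauliChannel_eigenvalue_eq_zero hsum hperfect isHermitian_PY PY_mul_self trace_PY
    PY_ne_zero (pauliChannel_PY w x y z)
  have hZ := pauliChannel_eigenvalue_eq_zero hsum hperfect isHermitian_PZ PZ_mul_self trace_PZ
    PZ_ne_zero (pauliChannel_PZ w x y z)
  refine ⟨?_, ?_, ?_, ?_⟩ <;> linarith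

/-- If the Pauli channel `E(ρ) = wρ + xXρX + yYρY + zZρZ` sends every single-qubit density
matrix to the completely mixed state `(1/2)I`, then `w = x = y = z = 1/4`: the uniform
distribution over the four Pauli matrices is the only Pauli scheme achieving perfect
encryption. -/
theorem perfect_pauli_encryption_unique (w x y z : ℝ)
    (hw : 0 ≤ w) (hx : 0 ≤ x) (hy : 0 ≤ y) (hz : 0 ≤ z)
    (hsum : w + x + y + z = 1)
    (hperfect : ∀ ρ : Matrix (Fin 2) (Fin 2) ℂ, ρ.PosSemidef → ρ.trace = 1 →
      w • ρ + x • (PX * ρ * PX) + y • (PY * ρ * PY) + z • (PZ * ρ * PZ)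
        = (1/2 : ℝ) • (1 : Matrix (Fin 2) (Fin 2) ℂ)) :
    w = 1/4 ∧ x = 1/4 ∧ y = 1/4 ∧ z = 1/4 :=
  perfect_pauli_encryption_unique_general w x y z hsum hperfect

end
end

section
/- Let 0 ≤ ε ≤ 1/6. For all real numbers w, z, x, y with w ≥ z ≥ x ≥ y ≥ 0, w + z + x + y = 1, and w + z = 1/2 + ε, the Shannon entropy satisfies H(w,z,x,y) ≥ H₁(ε), where H₁(ε) = −3(1/4 + ε/2)·log₂(1/4 + ε/2) − (1/4 − 3ε/2)·log₂(1/4 − 3ε/2). Moreover the bound is attained by the distribution (w,z,x,y) = (1/4 + ε/2, 1/4 + ε/2, 1/4 + ε/2, 1/4 − 3ε/2), which satisfies all the constraints. Hence for approximation parameter ε ≤ 1/6, the entropy-optimal Pauli encryption scheme is {1/4+ε/2, 1/4+ε/2, 1/4+ε/2, 1/4−3ε/2}. -/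
/-!
Entropy is concave, so it is minimised at extreme points. With `s = 1/2 - ε` fixed, moving
`(x, y)` apart to `(z, s - z)` lowers `N x + N y` (`N = negMulLog`); what remains is a concave
function of `z` alone on `[1/4 - ε/2, 1/4 + ε/2]`, minimised at an endpoint. The right endpoint
is the claimed distribution; the left one, `(1/4 + 3ε/2, 1/4 - ε/2, 1/4 - ε/2, 1/4 - ε/2)`, has
larger entropy because `t ↦ N (1/4 - t) - N (1/4 + t)` is concave and vanishes at `0`.
-/

noncomputable section

/-- `−p·log₂ p`, one term of the Shannon entropy (equals `0` at `p = 0`). -/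
def nmlb (p : ℝ) : ℝ := -(p * Real.logb 2 p)

/-- The Shannon entropy (in bits) of the probability vector `(w, z, x, y)`. -/
def Hent (w z x y : ℝ) : ℝ := nmlb w + nmlb z + nmlb x + nmlb y

/-- The entropy of the distribution `(1/4+ε/2, 1/4+ε/2, 1/4+ε/2, 1/4−3ε/2)`. -/
def H1 (ε : ℝ) : ℝ :=
  -(3 * ((1/4 + ε/2) * Real.logb 2 (1/4 + ε/2)))
    - (1/4 - 3*ε/2) * Real.logb 2 (1/4 - 3*ε/2)

open Real Set

theorem ConcaveOn.comp_const_sub {𝕜 E β : Type*} [Field 𝕜] [LinearOrder 𝕜] [AddCommGroup E]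
    [Module 𝕜 E] [AddCommMonoid β] [PartialOrder β] [SMul 𝕜 β] {s : Set E} {f : E → β}
    (hf : ConcaveOn 𝕜 s f) (c : E) : ConcaveOn 𝕜 ((c - ·) ⁻¹' s) (fun x => f (c - x)) :=
  hf.comp_affineMap (AffineMap.const 𝕜 E c - AffineMap.id 𝕜 E)

theorem ConcaveOn.map_add_map_le_of_add_eq {D : Set ℝ} {f : ℝ → ℝ} (hf : ConcaveOn ℝ D f)
    {a b c d : ℝ} (ha : a ∈ D) (hd : d ∈ D) (hab : a ≤ b) (hbd : b ≤ d) (hsum : b + c = a + d) :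
    f a + f d ≤ f b + f c := by
  have hsub : Icc a d ⊆ D := hf.1.ordConnected.out ha hd
  have hg : ConcaveOn ℝ (Icc a d) (fun t => f t + f (a + d - t)) := by
    refine (hf.subset hsub (convex_Icc a d)).add
      ((hf.comp_const_sub (a + d)).subset (fun t ht => hsub ?_) (convex_Icc a d))
    exact ⟨by linarith [ht.2], by linarith [ht.1]⟩
  have hmin := hg.min_le_of_mem_Icc (left_mem_Icc.2 (hab.trans hbd))
    (right_mem_Icc.2 (hab.trans hbd)) ⟨hab, hbd⟩
  rw [add_sub_cancel_left, add_sub_cancel_right, add_comm (f d), min_self,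
    show a + d - b = c by linarith] at hmin
  exact hmin

theorem concaveOn_negMulLog_sub_negMulLog_add {m : ℝ} :
    ConcaveOn ℝ (Icc 0 m) (fun t => negMulLog (m - t) - negMulLog (m + t)) := by
  have hderiv : ∀ t ∈ Ioo 0 m, HasDerivAt (fun t => negMulLog (m - t) - negMulLog (m + t))
      (log (m - t) + log (m + t) + 2) t := by
    intro t ht
    have h₁ := (hasDerivAt_negMulLog (sub_pos.2 ht.2).ne').comp t ((hasDerivAt_id t).const_sub m)
    have h₂ := (hasDerivAt_negMulLog (by linarith [ht.1, ht.2] : m + t ≠ 0)).comp t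
      ((hasDerivAt_id t).const_add m)
    exact (h₁.sub h₂).congr_deriv (by ring)
  refine AntitoneOn.concaveOn_of_deriv (convex_Icc 0 m) (by fun_prop) ?_ ?_ <;> rw [interior_Icc]
  · exact fun t ht => (hderiv t ht).differentiableAt.differentiableWithinAt
  · intro s hs t ht hst
    rw [(hderiv s hs).deriv, (hderiv t ht).deriv, ← log_mul, ← log_mul]
    · have := log_le_log (by nlinarith [ht.1, ht.2] : 0 < (m - t) * (m + t))
        (by nlinarith [hs.1, ht.2] : (m - t) * (m + t) ≤ (m - s) * (m + s))
      linarith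
    all_goals linarith [hs.1, hs.2, ht.1, ht.2]

theorem three_mul_negMulLog_add_le {m t : ℝ} (ht : 0 ≤ t) (htm : 3 * t ≤ m) :
    3 * negMulLog (m + t) + negMulLog (m - 3 * t)
      ≤ 3 * negMulLog (m - t) + negMulLog (m + 3 * t) := by
  -- `h t = N (m - t) - N (m + t)` is concave with `h 0 = 0`, so `h (3 t) ≤ 3 h t`.
  have h := concaveOn_negMulLog_sub_negMulLog_add.2 (⟨by linarith, htm⟩ : 3 * t ∈ Icc 0 m)
    (⟨le_rfl, by linarith⟩ : (0 : ℝ) ∈ Icc 0 m) (by norm_num : (0 : ℝ) ≤ 1 / 3)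
    (by norm_num : (0 : ℝ) ≤ 2 / 3) (by norm_num)
  simp only [smul_eq_mul, mul_zero, add_zero, sub_zero, sub_self] at h
  rw [show 1 / 3 * (3 * t) = t by ring] at h
  linarith

theorem concaveOn_negMulLog_profile {u v : ℝ} (hvu : v ≤ u) :
    ConcaveOn ℝ (Icc 0 v) (fun z => negMulLog (u - z) + 2 * negMulLog z + negMulLog (v - z)) := by
  have hN := concaveOn_negMulLog
  refine (((hN.comp_const_sub u).subset ?_ (convex_Icc 0 v)).add
    ((hN.subset ?_ (convex_Icc 0 v)).smul zero_le_two)).add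
    ((hN.comp_const_sub v).subset ?_ (convex_Icc 0 v)) <;>
  intro z hz <;> simp only [mem_preimage, mem_Ici] <;> linarith [hz.1, hz.2]

theorem negMulLog_profile_ge {ε z : ℝ} (hε0 : 0 ≤ ε) (hε1 : ε ≤ 1 / 6)
    (hz : z ∈ Icc (1 / 4 - ε / 2) (1 / 4 + ε / 2)) :
    3 * negMulLog (1 / 4 + ε / 2) + negMulLog (1 / 4 - 3 * ε / 2)
      ≤ negMulLog (1 / 2 + ε - z) + 2 * negMulLog z + negMulLog (1 / 2 - ε - z) := by
  have hconc := concaveOn_negMulLog_profile (by linarith : 1 / 2 - ε ≤ 1 / 2 + ε)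
  have hmin := hconc.min_le_of_mem_Icc ⟨by linarith, by linarith⟩ ⟨by linarith, by linarith⟩ hz
  have hends := three_mul_negMulLog_add_le (m := 1 / 4) (t := ε / 2) (by linarith) (by linarith)
  ring_nf at hmin hends ⊢
  rcases min_le_iff.1 hmin with h | h <;> linarith

theorem nmlb_eq_negMulLog_div (p : ℝ) : nmlb p = negMulLog p / log 2 := by
  rw [nmlb, negMulLog, logb]; ring

theorem H1_eq_negMulLog_div (ε : ℝ) :
    H1 ε = (3 * negMulLog (1 / 4 + ε / 2) + negMulLog (1 / 4 - 3 * ε / 2)) / log 2 := by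
  rw [H1, negMulLog, negMulLog, logb, logb]; ring

/-- For `0 ≤ ε ≤ 1/6`, every Pauli-scheme probability vector `(w, z, x, y)` with
decreasingly ordered weights and approximation parameter `ε = w + z − 1/2` has Shannon
entropy at least `H₁(ε)`, and the bound is attained by the admissible distribution
`(1/4+ε/2, 1/4+ε/2, 1/4+ε/2, 1/4−3ε/2)`. -/
theorem optimal_entropy_small_eps (ε : ℝ) (hε0 : 0 ≤ ε) (hε1 : ε ≤ 1/6) :
    (∀ w z x y : ℝ, w ≥ z → z ≥ x → x ≥ y → y ≥ 0 → w + z + x + y = 1 →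
      w + z = 1/2 + ε → H1 ε ≤ Hent w z x y)
    ∧ ((1/4 + ε/2 : ℝ) ≥ 1/4 + ε/2 ∧ (1/4 + ε/2 : ℝ) ≥ 1/4 + ε/2
        ∧ (1/4 + ε/2 : ℝ) ≥ 1/4 - 3*ε/2 ∧ (1/4 - 3*ε/2 : ℝ) ≥ 0
        ∧ (1/4 + ε/2) + (1/4 + ε/2) + (1/4 + ε/2) + (1/4 - 3*ε/2) = (1 : ℝ)
        ∧ (1/4 + ε/2) + (1/4 + ε/2) = (1/2 : ℝ) + ε
        ∧ Hent (1/4 + ε/2) (1/4 + ε/2) (1/4 + ε/2) (1/4 - 3*ε/2) = H1 ε) := by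
  refine ⟨fun w z x y hwz hzx hxy hy hsum hε => ?_, le_rfl, le_rfl, by linarith, by linarith,
    by ring, by ring, by simp only [Hent, H1, nmlb]; ring⟩
  obtain rfl : w = 1 / 2 + ε - z := by linarith
  have hpair : negMulLog (1 / 2 - ε - z) + negMulLog z ≤ negMulLog y + negMulLog x :=
    concaveOn_negMulLog.map_add_map_le_of_add_eq (mem_Ici.2 (by linarith))
      (mem_Ici.2 (by linarith)) (by linarith) (by linarith) (by linarith)
  have hprofile := negMulLog_profile_ge hε0 hε1 (z := z) ⟨by linarith, by linarith⟩
  simp only [H1_eq_negMulLog_div, Hent, nmlb_eq_negMulLog_div, ← add_div]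
  exact div_le_div_of_nonneg_right (by linarith) (log_nonneg one_le_two)

end
end

section
/- Let N ≥ 2 and let w₁ ≥ w₂ ≥ … ≥ w_N ≥ 0 be real numbers with Σₖ wₖ = 1 and w₁ + w₂ ≤ 1/2. Then the Shannon entropy satisfies −Σₖ wₖ log₂ wₖ ≥ 2. In particular, any single-qubit encryption scheme whose two largest weights sum to at most 1/2 uses at least 2 bits of entropy, and hence is no better than the perfect quantum one-time pad with four uniformly weighted Pauli unitaries. -/
noncomputable section

-- two-variable core inequality, in natural log form
lemma core {a b : ℝ} (ha : 0 < a) (hb : 0 < b) (hba : b ≤ a) (hab : a + b ≤ 1/2) :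
    a * Real.log a + (1 - a) * Real.log b ≤ -(2 * Real.log 2) := by
  have hlog14 : Real.log (1/4 : ℝ) = -(2 * Real.log 2) := by
    rw [show (1:ℝ)/4 = 2 ^ (-2 : ℤ) by norm_num, Real.log_zpow]; push_cast; ring
  have ha2 : a < 1/2 := by linarith
  have h1a : 0 < 1 - a := by linarith
  rcases le_or_gt a (1/4) with hc | hc
  · have hlb : Real.log b ≤ Real.log a := Real.log_le_log hb hba
    have hla : Real.log a ≤ Real.log (1/4) := Real.log_le_log ha hc
    nlinarith [h1a.le, hla, hlb]
  · -- a > 1/4 : use b ≤ 1/2 - a and AM-GM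
    have hd : 0 < 1/2 - a := by linarith
    have hbd : b ≤ 1/2 - a := by linarith
    have hlb : Real.log b ≤ Real.log (1/2 - a) := Real.log_le_log hb hbd
    have hgm := Real.geom_mean_le_arith_mean2_weighted ha.le h1a.le ha.le hd.le (by ring)
    have hP : (0:ℝ) < a ^ a * (1/2 - a) ^ (1 - a) :=
      mul_pos (Real.rpow_pos_of_pos ha _) (Real.rpow_pos_of_pos hd _)
    have hquad : a * a + (1 - a) * (1/2 - a) ≤ 1/4 := by nlinarith
    have hle : a ^ a * (1/2 - a) ^ (1 - a) ≤ 1/4 := le_trans hgm hquad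
    have hlogP : Real.log (a ^ a * (1/2 - a) ^ (1 - a)) =
        a * Real.log a + (1 - a) * Real.log (1/2 - a) := by
      rw [Real.log_mul (ne_of_gt (Real.rpow_pos_of_pos ha _)) (ne_of_gt (Real.rpow_pos_of_pos hd _)),
        Real.log_rpow ha, Real.log_rpow hd]
    have := Real.log_le_log hP hle
    rw [hlogP] at this
    nlinarith [hlb, h1a.le]

/-- Any probability distribution `w₁ ≥ w₂ ≥ … ≥ w_N ≥ 0` whose two largest weights sum to
at most `1/2` has Shannon entropy at least `2` bits; hence such an encryption scheme uses
no less entropy than the perfect quantum one-time pad with four uniform Pauli unitaries. -/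
theorem entropy_ge_two_of_top_two_small (N : ℕ) (hN : 2 ≤ N) (w : Fin N → ℝ)
    (hord : ∀ i j : Fin N, i ≤ j → w j ≤ w i)
    (hnn : ∀ k, 0 ≤ w k) (hsum : ∑ k, w k = 1)
    (htop : w ⟨0, by omega⟩ + w ⟨1, by omega⟩ ≤ 1/2) :
    2 ≤ ∑ k, nmlb (w k) := by
  set i0 : Fin N := ⟨0, by omega⟩ with hi0
  set i1 : Fin N := ⟨1, by omega⟩ with hi1
  set a := w i0 with hadef
  set b := w i1 with hbdef
  have h01 : i0 ≤ i1 := by simp [hi0, hi1, Fin.le_def]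
  have hba : b ≤ a := hord i0 i1 h01
  have hb0 : 0 < b := by
    rcases lt_or_eq_of_le (hnn i1) with h | h
    · exact h
    · exfalso
      have hz : ∀ k, k ≠ i0 → w k = 0 := by
        intro k hk
        have h1k : i1 ≤ k := by
          simp only [hi1, Fin.le_def]
          have : k.val ≠ 0 := fun h0 => hk (Fin.ext h0)
          omega
        exact le_antisymm (le_trans (hord i1 k h1k) h.symm.le) (hnn k)
      have : ∑ k, w k = a := Finset.sum_eq_single i0 (fun k _ hk => hz k hk)
        (fun h => absurd (Finset.mem_univ i0) h)
      rw [hsum] at this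
      linarith
  have ha0 : 0 < a := lt_of_lt_of_le hb0 hba
  -- pointwise bound
  have hpt : ∀ k ∈ Finset.univ, w k * (-(Real.logb 2 (if k = i0 then a else b))) ≤ nmlb (w k) := by
    intro k _
    by_cases hk : k = i0
    · simp [hk, nmlb]; exact le_rfl
    · simp only [if_neg hk]
      rcases lt_or_eq_of_le (hnn k) with hwk | hwk
      · have h1k : i1 ≤ k := by
          simp only [hi1, Fin.le_def]
          have : k.val ≠ 0 := fun h0 => hk (Fin.ext h0)
          omega
        have hkb : w k ≤ b := hord i1 k h1k
        have : Real.logb 2 (w k) ≤ Real.logb 2 b :=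
          Real.logb_le_logb_of_le (by norm_num) hwk hkb
        unfold nmlb
        nlinarith [hwk.le]
      · simp [nmlb, ← hwk]
  have hsumle := Finset.sum_le_sum hpt
  -- compute LHS sum
  have hrest : ∑ k ∈ Finset.univ.erase i0, w k = 1 - a := by
    have := Finset.add_sum_erase Finset.univ w (Finset.mem_univ i0)
    rw [hsum] at this; linarith
  have hlhs : ∑ k, w k * (-(Real.logb 2 (if k = i0 then a else b)))
      = a * (-(Real.logb 2 a)) + (1 - a) * (-(Real.logb 2 b)) := by
    rw [← Finset.add_sum_erase _ _ (Finset.mem_univ i0)]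
    have hrw : ∑ k ∈ Finset.univ.erase i0, w k * (-(Real.logb 2 (if k = i0 then a else b)))
        = (1 - a) * (-(Real.logb 2 b)) := by
      rw [← hrest, Finset.sum_mul]
      exact Finset.sum_congr rfl fun k hk => by rw [if_neg (Finset.ne_of_mem_erase hk)]
    rw [hrw, if_pos rfl, ← hadef]
  rw [hlhs] at hsumle
  refine le_trans ?_ hsumle
  -- final: 2 ≤ a * (-logb 2 a) + (1-a) * (-logb 2 b)
  have hcore := core ha0 hb0 hba (by rw [hadef, hbdef]; exact htop)
  have hl2 : (0:ℝ) < Real.log 2 := Real.log_pos (by norm_num)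
  rw [Real.logb, Real.logb, ← sub_nonneg]
  have h2 : a * -(Real.log a / Real.log 2) + (1 - a) * -(Real.log b / Real.log 2) - 2
      = (-(2 * Real.log 2) - (a * Real.log a + (1 - a) * Real.log b)) / Real.log 2 := by
    field_simp
    ring
  rw [h2]
  exact div_nonneg (by linarith) hl2.le


end
end

section
/- Let n ≥ 1, N ≥ 1, and let c : Fin N → (Fin n → Fin 4) assign to each index k a Pauli string, with corresponding unitary U^k = σ_{c(k)(1)} ⊗ … ⊗ σ_{c(k)(n)} (a Kronecker product of Pauli matrices). Let R(ρ) = (1/N) Σₖ U^k ρ (U^k)†, and let ρ₀ = (|0⟩⟨0|)^⊗n, the n-qubit all-zero basis state. Define χ : Fin 4 → {0,1} by χ(I) = χ(Z) = 0 and χ(X) = χ(Y) = 1, extended componentwise to strings. Then R(ρ₀) is diagonal in the computational basis and ‖R(ρ₀) − I/2ⁿ‖_∞ = max over b ∈ {0,1}ⁿ of |(#{k : χ∘c(k) = b})/N − 1/2ⁿ|. In particular, if at least a δ fraction of the N unitaries have χ∘c(k) = 0 (e.g., all equal the identity string), then ‖R(ρ₀) − I/2ⁿ‖_∞ ≥ δ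 − 1/2ⁿ, which shows that an encryption scheme built from a small-bias set can fail in the operator norm. -/
open Matrix
open scoped ComplexOrder

noncomputable section

/-- The four Pauli matrices, indexed by `Fin 4` as `I, X, Y, Z`. -/
def pauli : Fin 4 → Matrix (Fin 2) (Fin 2) ℂ :=
  ![1, !![0, 1; 1, 0], !![0, -Complex.I; Complex.I, 0], !![1, 0; 0, -1]]

/-- The Kronecker (tensor) product of `n` single-qubit matrices, as a `2ⁿ × 2ⁿ` matrix
indexed by functions `Fin n → Fin 2`. -/
def kron {n : ℕ} (M : Fin n → Matrix (Fin 2) (Fin 2) ℂ) :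
    Matrix (Fin n → Fin 2) (Fin n → Fin 2) ℂ :=
  fun i j => ∏ t, M t (i t) (j t)

/-- The `n`-qubit product state `(|0⟩⟨0|)^⊗n`. -/
def rho0 (n : ℕ) : Matrix (Fin n → Fin 2) (Fin n → Fin 2) ℂ :=
  kron (fun _ => !![1, 0; 0, 0])

/-- `χ(I) = χ(Z) = 0` and `χ(X) = χ(Y) = 1`. -/
def chi : Fin 4 → Fin 2 := ![0, 1, 1, 0]

/-! Conjugating `|0⟩⟨0|` by a Pauli matrix `σ` gives `|χ(σ)⟩⟨χ(σ)|`, so the Pauli string `U^k`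
maps `ρ₀` to the basis projector onto `χ∘c(k)`, and `R(ρ₀)` is the diagonal matrix whose entry at
`b` is the frequency of the pattern `b`. The operator norm of a diagonal matrix is the largest
modulus of its entries; the entry at `b = 0` gives the lower bound. -/

open Finset
open scoped Matrix.Norms.L2Operator

lemma kron_mul {n : ℕ} (M P : Fin n → Matrix (Fin 2) (Fin 2) ℂ) :
    kron M * kron P = kron fun t => M t * P t := by
  ext i j
  simp only [kron, mul_apply, prod_univ_sum, Fintype.piFinset_univ, prod_mul_distrib]

lemma kron_conjTranspose {n : ℕ} (M : Fin n → Matrix (Fin 2) (Fin 2) ℂ) :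
    (kron M)ᴴ = kron fun t => (M t)ᴴ := by
  ext i j
  simp [kron, conjTranspose_apply]

lemma kron_single_one {n : ℕ} (i j : Fin n → Fin 2) :
    kron (fun t => single (i t) (j t) (1 : ℂ)) = single i j 1 := by
  ext k l
  simp only [kron, single_apply, prod_boole, mem_univ, forall_const, funext_iff,
    forall_and]

lemma pauli_mul_single_zero_mul_conjTranspose (a : Fin 4) :
    pauli a * single 0 0 1 * (pauli a)ᴴ = single (chi a) (chi a) 1 := by
  fin_cases a <;> ext i j <;> fin_cases i <;> fin_cases j <;>
    simp [pauli, chi, mul_apply, vecMul, dotProduct, Fin.sum_univ_two, single_apply]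

lemma rho0_eq_kron_single (n : ℕ) : rho0 n = kron fun _ => single 0 0 1 := by
  rw [rho0]
  congr 1
  funext _
  ext i j
  fin_cases i <;> fin_cases j <;> simp

lemma pauliString_conj_rho0 {n : ℕ} (s : Fin n → Fin 4) :
    kron (fun t => pauli (s t)) * rho0 n * (kron fun t => pauli (s t))ᴴ
      = single (fun t => chi (s t)) (fun t => chi (s t)) 1 := by
  simp only [rho0_eq_kron_single, kron_conjTranspose, kron_mul,
    pauli_mul_single_zero_mul_conjTranspose]
  exact kron_single_one _ _

lemma sum_single_self_one {ι m R : Type*} [Fintype ι] [DecidableEq m] [Semiring R] (f : ι → m) :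
    ∑ k, single (f k) (f k) (1 : R) = diagonal fun b => (#{k | f k = b} : R) := by
  ext i j
  by_cases h : i = j
  · subst h; simp [Matrix.sum_apply, single_apply, sum_boole]
  · simp only [Matrix.sum_apply, single_apply, diagonal_apply_ne _ h]
    exact sum_eq_zero fun k _ => if_neg fun hk => h (hk.1.symm.trans hk.2)

lemma pi_norm_eq_ciSup {ι E : Type*} [Fintype ι] [SeminormedAddGroup E] (f : ι → E) :
    ‖f‖ = ⨆ i, ‖f i‖ := by
  rw [Pi.norm_def, sup_univ_eq_ciSup, NNReal.coe_iSup]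
  rfl

lemma opNorm_diagonal {m : Type*} [Fintype m] [DecidableEq m] (v : m → ℂ) :
    opNorm (diagonal v) = ⨆ i, ‖v i‖ := by
  rw [opNorm, l2_opNorm_toEuclideanCLM, l2_opNorm_diagonal, pi_norm_eq_ciSup]

theorem small_bias_fails_infty_norm_general (n N : ℕ) (hN : 1 ≤ N)
    (c : Fin N → Fin n → Fin 4) :
    (Matrix.IsDiag (((1 : ℝ)/N) •
        ∑ k : Fin N, (kron (fun t => pauli (c k t)) * rho0 n
          * (kron (fun t => pauli (c k t)))ᴴ)))
    ∧ opNorm ((((1 : ℝ)/N) •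
          ∑ k : Fin N, (kron (fun t => pauli (c k t)) * rho0 n
            * (kron (fun t => pauli (c k t)))ᴴ))
          - ((1 : ℝ)/2^n) • (1 : Matrix (Fin n → Fin 2) (Fin n → Fin 2) ℂ))
        = ⨆ b : Fin n → Fin 2,
            |((Finset.univ.filter (fun k : Fin N => (fun t => chi (c k t)) = b)).card : ℝ)/N
              - 1/2^n|
    ∧ ∀ δ : ℝ,
        δ * N ≤ ((Finset.univ.filter
            (fun k : Fin N => (fun t => chi (c k t)) = fun _ => (0 : Fin 2))).card : ℝ) →
        δ - 1/2^n
          ≤ opNorm ((((1 : ℝ)/N) •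
              ∑ k : Fin N, (kron (fun t => pauli (c k t)) * rho0 n
                * (kron (fun t => pauli (c k t)))ᴴ))
              - ((1 : ℝ)/2^n) • (1 : Matrix (Fin n → Fin 2) (Fin n → Fin 2) ℂ)) := by
  set freq : (Fin n → Fin 2) → ℝ := fun b => #{k | (fun t => chi (c k t)) = b} / N
  have hR : ((1 : ℝ)/N) • ∑ k : Fin N, (kron (fun t => pauli (c k t)) * rho0 n
      * (kron (fun t => pauli (c k t)))ᴴ) = diagonal fun b => (freq b : ℂ) := by
    simp only [pauliString_conj_rho0, sum_single_self_one, ← diagonal_smul]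
    congr 1
    funext b
    simp [freq, Complex.real_smul, div_eq_inv_mul]
  have hnorm : opNorm (((1 : ℝ)/N) • ∑ k : Fin N, (kron (fun t => pauli (c k t)) * rho0 n
      * (kron (fun t => pauli (c k t)))ᴴ)
      - ((1 : ℝ)/2^n) • (1 : Matrix (Fin n → Fin 2) (Fin n → Fin 2) ℂ))
      = ⨆ b, |freq b - 1/2^n| := by
    rw [hR, ← diagonal_one, ← diagonal_smul, diagonal_sub, opNorm_diagonal]
    refine iSup_congr fun b => ?_
    rw [← Real.norm_eq_abs, ← Complex.norm_real]
    simp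
  refine ⟨hR ▸ isDiag_diagonal _, hnorm, fun δ hδ => ?_⟩
  have hδ' : δ ≤ freq 0 := (le_div_iff₀ (by exact_mod_cast hN)).2 hδ
  rw [hnorm]
  calc δ - 1/2^n ≤ |freq 0 - 1/2^n| := le_abs.2 (Or.inl (by linarith))
    _ ≤ ⨆ b, |freq b - 1/2^n| :=
      le_ciSup (f := fun b => |freq b - 1/2^n|) (Set.finite_range _).bddAbove 0

/-- For a uniform mixture of `N` Pauli-string unitaries `U^k = σ_{c(k)(1)} ⊗ … ⊗ σ_{c(k)(n)}`
applied to the all-zeros state `ρ₀ = (|0⟩⟨0|)^⊗n`, the output `R(ρ₀)` is diagonal and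
`‖R(ρ₀) − I/2ⁿ‖_∞` is the maximum over bit strings `b` of `|#{k : χ∘c(k) = b}/N − 1/2ⁿ|`;
in particular, if at least a `δ` fraction of the unitaries have `χ∘c(k) = 0`, then
`‖R(ρ₀) − I/2ⁿ‖_∞ ≥ δ − 1/2ⁿ`, so such small-bias-set schemes can fail in the
operator norm. -/
theorem small_bias_fails_infty_norm (n N : ℕ) (hn : 1 ≤ n) (hN : 1 ≤ N)
    (c : Fin N → Fin n → Fin 4) :
    (Matrix.IsDiag (((1 : ℝ)/N) •
        ∑ k : Fin N, (kron (fun t => pauli (c k t)) * rho0 n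
          * (kron (fun t => pauli (c k t)))ᴴ)))
    ∧ opNorm ((((1 : ℝ)/N) •
          ∑ k : Fin N, (kron (fun t => pauli (c k t)) * rho0 n
            * (kron (fun t => pauli (c k t)))ᴴ))
          - ((1 : ℝ)/2^n) • (1 : Matrix (Fin n → Fin 2) (Fin n → Fin 2) ℂ))
        = ⨆ b : Fin n → Fin 2,
            |((Finset.univ.filter (fun k : Fin N => (fun t => chi (c k t)) = b)).card : ℝ)/N
              - 1/2^n|
    ∧ ∀ δ : ℝ,
        δ * N ≤ ((Finset.univ.filter
            (fun k : Fin N => (fun t => chi (c k t)) = fun _ => (0 : Fin 2))).card : ℝ) →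
        δ - 1/2^n
          ≤ opNorm ((((1 : ℝ)/N) •
              ∑ k : Fin N, (kron (fun t => pauli (c k t)) * rho0 n
                * (kron (fun t => pauli (c k t)))ᴴ))
              - ((1 : ℝ)/2^n) • (1 : Matrix (Fin n → Fin 2) (Fin n → Fin 2) ℂ)) :=
  small_bias_fails_infty_norm_general n N hN c

end
end
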